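/- Let R : ℝ^d → ℝ be continuous and nonnegative, and for λ ∈ ℝ^V (V a finite set of nonzero vectors spanning ℝ^d) define Q(λ) = {p ∈ ℝ^d : p · e ≤ λ_e for all e ∈ V}. If Q(λ) is bounded for all λ in a neighborhood, then the map λ ↦ ∫_{Q(λ)} R(p) dp is continuous at λ. -/

import Mathlib

/-!
By dominated convergence. For `p` off the finitely many hyperplanes `⟪p, e i⟫ = lam₀ i`, which
are Lebesgue-null, membership `p ∈ Q(lam)` is locally constant in `lam` near `lam₀`. Near `lam₀`
every `Q(lam)` lies in one `Q(lam₁)` with `lam₀ < lam₁` coordinatewise, which is compact, so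
`R` restricted to it is an integrable dominating function.
-/

open scoped RealInnerProductSpace
open MeasureTheory Filter Topology

theorem Filter.Eventually.exists_forall_lt {ι : Type*} {P : (ι → ℝ) → Prop} {a : ι → ℝ}
    (h : ∀ᶠ x in 𝓝 a, P x) : ∃ b, (∀ i, a i < b i) ∧ P b := by
  have hcont : Continuous fun t : ℝ => a + fun _ => t := by fun_prop
  have hpath : Tendsto (fun t : ℝ => a + fun _ => t) (𝓝[>] 0) (𝓝 a) :=
    (hcont.tendsto' 0 a (by ext; simp)).mono_left nhdsWithin_le_nhds
  obtain ⟨t, hPt, ht⟩ := ((hpath.eventually h).and self_mem_nhdsWithin).exists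
  exact ⟨_, fun i => lt_add_of_pos_right (a i) ht, hPt⟩

theorem eventually_forall_lt_apply {ι : Type*} [Finite ι] {a b : ι → ℝ} (h : ∀ i, a i < b i) :
    ∀ᶠ x in 𝓝 a, ∀ i, x i < b i :=
  eventually_all.mpr fun i => ((continuous_apply i).tendsto a).eventually (gt_mem_nhds (h i))

theorem addHaar_setOf_apply_eq {E : Type*} [NormedAddCommGroup E] [NormedSpace ℝ E]
    [MeasurableSpace E] [BorelSpace E] [FiniteDimensional ℝ E] (μ : Measure E)
    [μ.IsAddHaarMeasure] {f : E →ₗ[ℝ] ℝ} (hf : f ≠ 0) (c : ℝ) :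
    μ {p | f p = c} = 0 := by
  obtain ⟨x, hx⟩ : ∃ x, f x ≠ 0 := by simpa [LinearMap.ext_iff] using hf
  set p₀ := (c / f x) • x
  have hker : LinearMap.ker f ≠ ⊤ := fun h => hx (LinearMap.ker_eq_top.mp h ▸ rfl)
  have hlevel : {p | f p = c} = (fun p => p + -p₀) ⁻¹' LinearMap.ker f := by
    ext p
    simp [p₀, div_mul_cancel₀ c hx, add_neg_eq_zero]
  rw [hlevel, measure_preimage_add_right]
  exact Measure.addHaar_submodule μ _ hker

section Polyhedron

variable {E ι : Type*} [NormedAddCommGroup E] [InnerProductSpace ℝ E]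

theorem addHaar_setOf_inner_eq [MeasurableSpace E] [BorelSpace E] [FiniteDimensional ℝ E]
    (μ : Measure E) [μ.IsAddHaarMeasure] {v : E} (hv : v ≠ 0) (c : ℝ) :
    μ {p | ⟪p, v⟫ = c} = 0 := by
  have hf : innerₛₗ ℝ v ≠ 0 := fun h => hv (inner_self_eq_zero.mp (LinearMap.congr_fun h v))
  simpa [real_inner_comm] using addHaar_setOf_apply_eq μ hf c

def polyhedron (e : ι → E) (lam : ι → ℝ) : Set E :=
  {p | ∀ i, ⟪p, e i⟫ ≤ lam i}

variable {e : ι → E}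

theorem isClosed_polyhedron (lam : ι → ℝ) : IsClosed (polyhedron e lam) := by
  simp only [polyhedron, Set.ofPred_forall]
  exact isClosed_iInter fun i => isClosed_le (by fun_prop) continuous_const

theorem polyhedron_mono {lam lam' : ι → ℝ} (h : lam ≤ lam') :
    polyhedron e lam ⊆ polyhedron e lam' :=
  fun _ hp i => (hp i).trans (h i)

theorem eventually_mem_polyhedron_iff [Finite ι] {p : E} {lam₀ : ι → ℝ}
    (hp : ∀ i, ⟪p, e i⟫ ≠ lam₀ i) :
    ∀ᶠ lam in 𝓝 lam₀, (p ∈ polyhedron e lam ↔ p ∈ polyhedron e lam₀) := by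
  by_cases hmem : p ∈ polyhedron e lam₀
  · have hlt : ∀ᶠ lam in 𝓝 lam₀, ∀ i, ⟪p, e i⟫ < lam i :=
      eventually_all.mpr fun i => ((continuous_apply i).tendsto lam₀).eventually
        (lt_mem_nhds ((hmem i).lt_of_ne (hp i)))
    filter_upwards [hlt] with lam hlam
    exact iff_of_true (fun i => (hlam i).le) hmem
  · obtain ⟨i, hi⟩ : ∃ i, lam₀ i < ⟪p, e i⟫ := by
      simpa [polyhedron] using hmem
    filter_upwards [((continuous_apply i).tendsto lam₀).eventually (gt_mem_nhds hi)] with lam hlam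
    exact iff_of_false (fun h => (h i).not_gt hlam) hmem

theorem continuousAt_indicator_polyhedron_apply [Finite ι] {G : Type*} [Zero G]
    [TopologicalSpace G] (f : E → G) {p : E} {lam₀ : ι → ℝ} (hp : ∀ i, ⟪p, e i⟫ ≠ lam₀ i) :
    ContinuousAt (fun lam => (polyhedron e lam).indicator f p) lam₀ :=
  (continuousAt_const (y := (polyhedron e lam₀).indicator f p)).congr <|
    (eventually_mem_polyhedron_iff hp).mono fun lam hlam => by
      dsimp only
      by_cases h : p ∈ polyhedron e lam₀
      · rw [Set.indicator_of_mem h, Set.indicator_of_mem (hlam.mpr h)]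
      · rw [Set.indicator_of_notMem h, Set.indicator_of_notMem (mt hlam.mp h)]

theorem continuousAt_setIntegral_polyhedron [MeasurableSpace E] [BorelSpace E]
    [FiniteDimensional ℝ E] {μ : Measure E} [μ.IsAddHaarMeasure] [Finite ι] {G : Type*}
    [NormedAddCommGroup G] [NormedSpace ℝ G] (he : ∀ i, e i ≠ 0) {f : E → G}
    {lam₀ lam₁ : ι → ℝ} (hlt : ∀ i, lam₀ i < lam₁ i) (hf : IntegrableOn f (polyhedron e lam₁) μ) :
    ContinuousAt (fun lam => ∫ p in polyhedron e lam, f p ∂μ) lam₀ := by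
  have hmeas (lam : ι → ℝ) := (isClosed_polyhedron (e := e) lam).measurableSet
  simp only [← integral_indicator (hmeas _)]
  have hsub : ∀ᶠ lam in 𝓝 lam₀, polyhedron e lam ⊆ polyhedron e lam₁ :=
    (eventually_forall_lt_apply hlt).mono fun lam hlam => polyhedron_mono fun i => (hlam i).le
  have hoff : ∀ᵐ p ∂μ, ∀ i, ⟪p, e i⟫ ≠ lam₀ i := ae_all_iff.mpr fun i =>
    measure_eq_zero_iff_ae_notMem.mp (addHaar_setOf_inner_eq μ (he i) (lam₀ i))
  refine continuousAt_of_dominated (bound := fun p => ‖(polyhedron e lam₁).indicator f p‖) ?_ ?_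
    (hf.integrable_indicator (hmeas _)).norm ?_
  · filter_upwards [hsub] with lam hlam
    exact ((hf.mono_set hlam).integrable_indicator (hmeas _)).aestronglyMeasurable
  · filter_upwards [hsub] with lam hlam
    exact Eventually.of_forall (norm_indicator_le_of_subset hlam f)
  · filter_upwards [hoff] with p hp
    exact continuousAt_indicator_polyhedron_apply f hp

end Polyhedron

theorem integral_over_polyhedron_continuous_general {d : ℕ} {ι : Type*} [Fintype ι]
    (e : ι → EuclideanSpace ℝ (Fin d)) (he : ∀ i, e i ≠ 0)
    (R : EuclideanSpace ℝ (Fin d) → ℝ) (hR : Continuous R)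
    (lam₀ : ι → ℝ)
    (hbdd : ∀ᶠ lam in nhds lam₀,
      Bornology.IsBounded {p : EuclideanSpace ℝ (Fin d) | ∀ i, ⟪p, e i⟫ ≤ lam i}) :
    ContinuousAt (fun lam : ι → ℝ =>
      ∫ p in {p : EuclideanSpace ℝ (Fin d) | ∀ i, ⟪p, e i⟫ ≤ lam i}, R p) lam₀ := by
  obtain ⟨lam₁, hlt, hbdd₁⟩ := hbdd.exists_forall_lt
  have hcompact : IsCompact (polyhedron e lam₁) :=
    Metric.isCompact_of_isClosed_isBounded (isClosed_polyhedron lam₁) hbdd₁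
  exact continuousAt_setIntegral_polyhedron he hlt (hR.continuousOn.integrableOn_compact hcompact)

/-- Continuity of `λ ↦ ∫_{Q(λ)} R` for a continuous nonnegative density and
polyhedra `Q(λ)` that are bounded for `λ` in a neighborhood. -/
theorem integral_over_polyhedron_continuous {d : ℕ} {ι : Type*} [Fintype ι]
    (e : ι → EuclideanSpace ℝ (Fin d)) (he : ∀ i, e i ≠ 0)
    (hspan : Submodule.span ℝ (Set.range e) = ⊤)
    (R : EuclideanSpace ℝ (Fin d) → ℝ) (hR : Continuous R) (hR0 : ∀ p, 0 ≤ R p)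
    (lam₀ : ι → ℝ)
    (hbdd : ∀ᶠ lam in nhds lam₀,
      Bornology.IsBounded {p : EuclideanSpace ℝ (Fin d) | ∀ i, ⟪p, e i⟫ ≤ lam i}) :
    ContinuousAt (fun lam : ι → ℝ =>
      ∫ p in {p : EuclideanSpace ℝ (Fin d) | ∀ i, ⟪p, e i⟫ ≤ lam i}, R p) lam₀ :=
  integral_over_polyhedron_continuous_general e he R hR lam₀ hbdd
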